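/- Consider the PROP1 reduction instance: given nonnegative numbers a_1,...,a_m summing to 2S (S>0, each a_i ≤ S), three agents, m number-items and 4 extra-items e_1,...,e_4; Alice values number-items at 0 and each e_i at 3S/2; Bob and Carl value number-item i at a_i and each e_j at S. Then there exists an allocation that is both utilitarian-maximal and PROP1 if and only if the numbers can be partitioned into two sets each summing to S. -/

import Mathlib

/-!
A welfare-maximal allocation gives every item to an agent who values it most, so the four
extra-items go to Alice (`3S/2 > S`). Bob and Carl then share only number-items, worth `2S` in
total, while PROP1 — every single item being worth at most `S` to them — forces each of their
bundles to be worth at least `S`; hence Bob's numbers sum to exactly `S`. Conversely, from a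
partition, give the extra-items to Alice and the two halves to Bob and Carl: this is
welfare-maximal, and Bob and Carl each reach `2S` by adding one extra-item.
-/

open Finset

variable {m : ℕ}

/-- Utilities of the three agents (0 = Alice, 1 = Bob, 2 = Carl) over the `m` number-items
(`Sum.inl j`) and the 4 extra-items (`Sum.inr e`): Alice values number-items at 0 and each
extra-item at `3S/2`; Bob and Carl value number-item `j` at `a j` and each extra-item at `S`. -/
noncomputable def u9 (S : ℝ) (a : Fin m → ℝ) : Fin 3 → (Fin m ⊕ Fin 4) → ℝ :=
  fun i o => match o with
  | Sum.inl j => if i = 0 then 0 else a j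
  | Sum.inr _ => if i = 0 then 3 * S / 2 else S

/-- The bundle of agent `i` under allocation `p`. -/
def bundle9 (p : (Fin m ⊕ Fin 4) → Fin 3) (i : Fin 3) : Finset (Fin m ⊕ Fin 4) :=
  Finset.univ.filter (fun o => p o = i)

/-- Utilitarian welfare of an allocation. -/
noncomputable def welf9 (S : ℝ) (a : Fin m → ℝ) (p : (Fin m ⊕ Fin 4) → Fin 3) : ℝ :=
  ∑ o, u9 S a (p o) o

/-- PROP1: each agent gets their proportional share `uᵢ(O)/3`, possibly after adding the
value of one item not allocated to them, or after removing one item from their bundle. -/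
def PROP1_9 (S : ℝ) (a : Fin m → ℝ) (p : (Fin m ⊕ Fin 4) → Fin 3) : Prop :=
  ∀ i : Fin 3,
    (∑ o, u9 S a i o) / 3 ≤ ∑ o ∈ bundle9 p i, u9 S a i o ∨
    (∃ o ∉ bundle9 p i, (∑ o, u9 S a i o) / 3 ≤ (∑ o ∈ bundle9 p i, u9 S a i o) + u9 S a i o) ∨
    (∃ o ∈ bundle9 p i, (∑ o, u9 S a i o) / 3 ≤ (∑ o ∈ bundle9 p i, u9 S a i o) - u9 S a i o)

theorem welfare_maximal_iff {ι α M : Type*} [Fintype α] [DecidableEq α] [AddCommMonoid M]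
    [LinearOrder M] [IsOrderedCancelAddMonoid M] (u : ι → α → M) (p : α → ι) :
    (∀ q : α → ι, ∑ o, u (q o) o ≤ ∑ o, u (p o) o) ↔ ∀ o i, u i o ≤ u (p o) o := by
  refine ⟨fun hmax o i => ?_, fun h q => sum_le_sum fun o _ => h o (q o)⟩
  by_contra! hlt
  -- Handing the single item `o` to `i` would strictly increase the welfare.
  refine (hmax (Function.update p o i)).not_gt
    (sum_lt_sum (fun o' _ => ?_) ⟨o, mem_univ o, by simpa using hlt⟩)
  rcases eq_or_ne o' o with rfl | hne
  · simpa using hlt.le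
  · simp [Function.update_of_ne hne]

section Reduction

variable {S : ℝ} {a : Fin m → ℝ}

lemma sum_u9 (hsum : ∑ j, a j = 2 * S) (i : Fin 3) : ∑ o, u9 S a i o = 6 * S := by
  rw [Fintype.sum_sum_type]
  by_cases hi : i = 0 <;> simp [u9, hi, hsum] <;> ring

lemma u9_nonneg (hS : 0 ≤ S) (ha0 : ∀ j, 0 ≤ a j) (i : Fin 3) (o : Fin m ⊕ Fin 4) :
    0 ≤ u9 S a i o := by
  rcases o with j | e <;> simp only [u9] <;> split_ifs <;> first | exact ha0 j | positivity

lemma u9_le_of_ne_zero (haS : ∀ j, a j ≤ S) {i : Fin 3} (hi : i ≠ 0) (o : Fin m ⊕ Fin 4) :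
    u9 S a i o ≤ S := by
  rcases o with j | e <;> simp [u9, hi, haS]

lemma welf9_maximal_iff (hS : 0 < S) (ha0 : ∀ j, 0 ≤ a j) (p : Fin m ⊕ Fin 4 → Fin 3) :
    (∀ q, welf9 S a q ≤ welf9 S a p) ↔
      (∀ e, p (Sum.inr e) = 0) ∧ ∀ j, p (Sum.inl j) = 0 → a j = 0 := by
  refine (welfare_maximal_iff (u9 S a) p).trans ⟨fun h => ⟨fun e => ?_, fun j hj => ?_⟩, ?_⟩
  · by_contra hne
    have := h (Sum.inr e) 0
    simp only [u9, hne, if_true, if_false] at this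
    linarith
  · have := h (Sum.inl j) 1
    simp only [u9, hj, one_ne_zero, if_true, if_false] at this
    exact le_antisymm this (ha0 j)
  · rintro ⟨hext, hnum⟩ (j | e) i
    · by_cases hj : p (Sum.inl j) = 0
      · simp [u9, hj, hnum j hj]
      · simp only [u9, hj, if_false]
        split_ifs
        exacts [ha0 j, le_rfl]
    · simp only [u9, hext e, if_true]
      split_ifs <;> linarith

lemma sum_bundle9_zero {p : Fin m ⊕ Fin 4 → Fin 3} (hext : ∀ e, p (Sum.inr e) = 0) :
    ∑ o ∈ bundle9 p 0, u9 S a 0 o = ∑ o, u9 S a 0 o := by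
  refine sum_subset (subset_univ _) fun o _ ho => ?_
  rcases o with j | e
  · simp [u9]
  · simp [bundle9, hext e] at ho

lemma sum_bundle9_of_ne_zero {p : Fin m ⊕ Fin 4 → Fin 3} (hext : ∀ e, p (Sum.inr e) = 0)
    {i : Fin 3} (hi : i ≠ 0) :
    ∑ o ∈ bundle9 p i, u9 S a i o = ∑ j with p (Sum.inl j) = i, a j := by
  rw [bundle9, sum_filter, Fintype.sum_sum_type, sum_filter]
  simp [u9, hi, hext, Ne.symm hi]

lemma le_sum_bundle9_of_PROP1 {p : Fin m ⊕ Fin 4 → Fin 3} (hp : PROP1_9 S a p)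
    (hsum : ∑ j, a j = 2 * S) {i : Fin 3} (hnonneg : ∀ o, 0 ≤ u9 S a i o)
    (hle : ∀ o, u9 S a i o ≤ S) : S ≤ ∑ o ∈ bundle9 p i, u9 S a i o := by
  have hS : 0 ≤ S := (hnonneg (Sum.inr 0)).trans (hle _)
  have hi := hp i
  rw [sum_u9 hsum] at hi
  rcases hi with h | ⟨o, -, h⟩ | ⟨o, -, h⟩
  · linarith
  · linarith [hle o]
  · linarith [hnonneg o]

lemma sum_filter_eq_one_of_PROP1 (hS : 0 ≤ S) (ha0 : ∀ j, 0 ≤ a j) (haS : ∀ j, a j ≤ S)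
    (hsum : ∑ j, a j = 2 * S) {p : Fin m ⊕ Fin 4 → Fin 3} (hext : ∀ e, p (Sum.inr e) = 0)
    (hp : PROP1_9 S a p) : ∑ j with p (Sum.inl j) = 1, a j = S := by
  have hbundle (i : Fin 3) (hi : i ≠ 0) : S ≤ ∑ j with p (Sum.inl j) = i, a j := by
    rw [← sum_bundle9_of_ne_zero hext hi]
    exact le_sum_bundle9_of_PROP1 hp hsum (u9_nonneg hS ha0 i) (u9_le_of_ne_zero haS hi)
  have hcarl : ∑ j with p (Sum.inl j) = 2, a j ≤ ∑ j with ¬p (Sum.inl j) = 1, a j :=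
    sum_le_sum_of_subset_of_nonneg (monotone_filter_right _ fun j _ h => by simp [h])
      fun j _ _ => ha0 j
  have hsplit := sum_filter_add_sum_filter_not univ (fun j => p (Sum.inl j) = 1) a
  linarith [hbundle 1 one_ne_zero, hbundle 2 (by decide)]

def partitionAlloc (T : Finset (Fin m)) : Fin m ⊕ Fin 4 → Fin 3 :=
  Sum.elim (fun j => if j ∈ T then 1 else 2) fun _ => 0

lemma PROP1_9_partitionAlloc (hS : 0 ≤ S) (hsum : ∑ j, a j = 2 * S) {T : Finset (Fin m)}
    (hT : ∑ j ∈ T, a j = S) : PROP1_9 S a (partitionAlloc T) := by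
  have hext (e : Fin 4) : partitionAlloc T (Sum.inr e) = 0 := rfl
  have hbob : ∑ j with partitionAlloc T (Sum.inl j) = 1, a j = S := by
    simpa [partitionAlloc] using hT
  have hcarl : ∑ j with partitionAlloc T (Sum.inl j) = 2, a j = S := by
    have := sum_filter_add_sum_filter_not univ (· ∈ T) a
    simp_all [partitionAlloc]
    linarith
  have hextra {i : Fin 3} (hi : i ≠ 0)
      (hval : ∑ o ∈ bundle9 (partitionAlloc T) i, u9 S a i o = S) :
      ∃ o ∉ bundle9 (partitionAlloc T) i,
        (∑ o, u9 S a i o) / 3 ≤ ∑ o ∈ bundle9 (partitionAlloc T) i, u9 S a i o + u9 S a i o := by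
    refine ⟨Sum.inr 0, by simp [bundle9, hext, Ne.symm hi], ?_⟩
    rw [hval, sum_u9 hsum]
    simp [u9, hi]
    linarith
  intro i
  obtain rfl | rfl | rfl : i = 0 ∨ i = 1 ∨ i = 2 := by fin_cases i <;> simp
  · left
    rw [sum_bundle9_zero hext, sum_u9 hsum]
    linarith
  · exact Or.inr <| Or.inl <| hextra one_ne_zero <| by
      rw [sum_bundle9_of_ne_zero hext one_ne_zero, hbob]
  · exact Or.inr <| Or.inl <| hextra (by decide) <| by
      rw [sum_bundle9_of_ne_zero hext (by decide), hcarl]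

end Reduction

/-- There is an allocation that is both utilitarian-maximal and PROP1 iff the numbers
`a₁,…,a_m` (summing to `2S`) can be partitioned into two sets each summing to `S`. -/
theorem stmt9 (S : ℝ) (hS : 0 < S) (a : Fin m → ℝ)
    (ha0 : ∀ j, 0 ≤ a j) (haS : ∀ j, a j ≤ S) (hsum : ∑ j, a j = 2 * S) :
    (∃ p : (Fin m ⊕ Fin 4) → Fin 3,
        (∀ q : (Fin m ⊕ Fin 4) → Fin 3, welf9 S a q ≤ welf9 S a p) ∧ PROP1_9 S a p) ↔
      ∃ T : Finset (Fin m), ∑ j ∈ T, a j = S := by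
  constructor
  · rintro ⟨p, hmax, hprop⟩
    have hext := ((welf9_maximal_iff hS ha0 p).1 hmax).1
    exact ⟨_, sum_filter_eq_one_of_PROP1 hS.le ha0 haS hsum hext hprop⟩
  · rintro ⟨T, hT⟩
    have hnum (j : Fin m) : partitionAlloc T (Sum.inl j) ≠ 0 := by
      by_cases hj : j ∈ T <;> simp [partitionAlloc, hj]
    refine ⟨partitionAlloc T, ?_, PROP1_9_partitionAlloc hS.le hsum hT⟩
    exact (welf9_maximal_iff hS ha0 _).2 ⟨fun _ => rfl, fun j h => absurd h (hnum j)⟩
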